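/- Let (J_t)_{t≥0} be a monotone radial jump process on ℤ² started at the origin. Then for every pair u, v ∈ ℤ² with ‖v‖_∞ ≥ ‖u‖₁ and every t ≥ 0, P(J_t = u) ≥ P(J_t = v). -/

import Mathlib

/-!
Reflections of `ℤ²` in the lines `x = k/2` and `x - y = c` are isometries for `‖·‖₁`. Call `f`
reflection monotone if it is invariant under the symmetries of the square and, for each such
reflection `σ` not fixing the origin, `f (σ w) ≤ f w` for all `w` on the origin's side. Pairing
each `w` with `σ w` and using that `ρ` is non-increasing shows that one step of the process
preserves this property. The point mass at the origin has it, and a chain of three reflections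
`(a, b) → (a, 0) → (c + d, 0) → (c, d)` turns it into the claim.

The real `tsum`s vanish when not summable. In `ℝ≥0∞`, the one-step sum of a reflection monotone
function is finite everywhere or nowhere, so this junk value never breaks an inequality.
-/

/-- Manhattan (L¹) distance on the grid `ℤ²`. -/
def dist1 (u v : ℤ × ℤ) : ℕ := (u.1 - v.1).natAbs + (u.2 - v.2).natAbs

open Function
open scoped ENNReal

theorem ENNReal.mul_add_mul_le_mul_add_mul {a a' b b' : ℝ≥0∞} (ha : a' ≤ a) (hb : b' ≤ b) :
    a * b' + a' * b ≤ a * b + a' * b' := by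
  obtain ⟨e, rfl⟩ := exists_add_of_le hb
  calc a * b' + a' * (b' + e) = (a * b' + a' * b') + a' * e := by ring
    _ ≤ (a * b' + a' * b') + a * e := by gcongr
    _ = a * (b' + e) + a' * b' := by ring

theorem ENNReal.tsum_le_tsum_of_involutive {α : Type*} {F G : α → ℝ≥0∞} {σ : α → α}
    (hσ : Involutive σ) (h : ∀ a, G a + G (σ a) ≤ F a + F (σ a)) : ∑' a, G a ≤ ∑' a, F a := by
  have double (H : α → ℝ≥0∞) : ∑' a, (H a + H (σ a)) = 2 * ∑' a, H a := by
    rw [ENNReal.tsum_add, two_mul, ← hσ.coe_toPerm, (hσ.toPerm σ).tsum_eq H]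
  rw [← ENNReal.mul_le_mul_iff_right two_ne_zero ENNReal.ofNat_ne_top, ← double, ← double]
  exact ENNReal.tsum_le_tsum h

theorem ENNReal.tsum_comp_ediv (n : ℕ) [NeZero n] (h : ℤ → ℝ≥0∞) :
    ∑' a : ℤ, h (a / n) = n * ∑' q, h q := by
  calc ∑' a : ℤ, h (a / n) = ∑' p : ℤ × Fin n, h p.1 :=
        (Int.divModEquiv n).tsum_eq (fun p => h p.1)
    _ = ∑' q, n * h q := by
        rw [ENNReal.tsum_prod (f := fun q (_ : Fin n) => h q)]
        simp [tsum_fintype, Finset.sum_const, nsmul_eq_mul]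
    _ = n * ∑' q, h q := ENNReal.tsum_mul_left

theorem ENNReal.tsum_comp_ediv_prod (n : ℕ) [NeZero n] (h : ℤ × ℤ → ℝ≥0∞) :
    ∑' w : ℤ × ℤ, h (w.1 / n, w.2 / n) = n ^ 2 * ∑' q, h q := by
  calc ∑' w : ℤ × ℤ, h (w.1 / n, w.2 / n) = ∑' (a : ℤ) (b : ℤ), h (a / n, b / n) :=
        ENNReal.tsum_prod (f := fun a b => h (a / n, b / n))
    _ = ∑' a : ℤ, n * ∑' b, h (a / n, b) :=
        tsum_congr fun a => ENNReal.tsum_comp_ediv n (fun b => h (a / n, b))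
    _ = n * (n * ∑' (a : ℤ) (b : ℤ), h (a, b)) := by
        rw [ENNReal.tsum_mul_left, ENNReal.tsum_comp_ediv n (fun a => ∑' b, h (a, b))]
    _ = n ^ 2 * ∑' q, h q := by rw [← ENNReal.tsum_prod, sq, mul_assoc]

namespace RadialJump

def normL1 (w : ℤ × ℤ) : ℕ := w.1.natAbs + w.2.natAbs

def normLinf (w : ℤ × ℤ) : ℕ := max w.1.natAbs w.2.natAbs

theorem normL1_add_le (a b : ℤ × ℤ) : normL1 (a + b) ≤ normL1 a + normL1 b := by
  simp only [normL1, Prod.fst_add, Prod.snd_add]; omega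

theorem two_mul_normL1_ediv_four_le (w : ℤ × ℤ) :
    2 * normL1 (w.1 / 4, w.2 / 4) ≤ normLinf w + 4 := by
  simp only [normL1, normLinf]; omega

theorem normLinf_le_dist1_add (w x : ℤ × ℤ) : normLinf w ≤ dist1 w x + normL1 x := by
  simp only [normLinf, dist1, normL1]; omega

theorem dist1_add_left (y b : ℤ × ℤ) : dist1 (y + b) y = normL1 b := by
  simp [dist1, normL1]

theorem lt_normLinf_of_notMem_Icc {N : ℕ} {w : ℤ × ℤ}
    (hw : w ∉ Finset.Icc (-(N : ℤ), -(N : ℤ)) ((N : ℤ), (N : ℤ))) :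
    N < normLinf w := by
  obtain ⟨w₁, w₂⟩ := w
  simp only [Finset.mem_Icc, Prod.mk_le_mk, not_and_or, not_le] at hw
  simp only [normLinf]; omega

/-- The last two fields say that `f` decreases under the reflection in the line `x = k/2`,
resp. `x - y = c`, taking points on the origin's side to the other side. -/
structure ReflectionMonotone {M : Type*} [Preorder M] (f : ℤ × ℤ → M) : Prop where
  neg_fst : ∀ x y : ℤ, f (-x, y) = f (x, y)
  neg_snd : ∀ x y : ℤ, f (x, -y) = f (x, y)
  swap : ∀ x y : ℤ, f (y, x) = f (x, y)
  reflect_vertical : ∀ k x y : ℤ, 1 ≤ k → 2 * x ≤ k → f (k - x, y) ≤ f (x, y)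
  reflect_diagonal : ∀ c x y : ℤ, 1 ≤ c → x - y ≤ c → f (y + c, x - c) ≤ f (x, y)

namespace ReflectionMonotone

variable {M : Type*} [Preorder M] {f : ℤ × ℤ → M}

theorem comp {N : Type*} [Preorder N] (hf : ReflectionMonotone f) {φ : M → N}
    (hφ : MonotoneOn φ (Set.range f)) : ReflectionMonotone (φ ∘ f) where
  neg_fst x y := congrArg φ (hf.neg_fst x y)
  neg_snd x y := congrArg φ (hf.neg_snd x y)
  swap x y := congrArg φ (hf.swap x y)
  reflect_vertical k x y hk hx := hφ ⟨_, rfl⟩ ⟨_, rfl⟩ (hf.reflect_vertical k x y hk hx)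
  reflect_diagonal c x y hc hxy := hφ ⟨_, rfl⟩ ⟨_, rfl⟩ (hf.reflect_diagonal c x y hc hxy)

theorem apply_natAbs (hf : ReflectionMonotone f) (x y : ℤ) :
    f ((x.natAbs : ℤ), (y.natAbs : ℤ)) = f (x, y) := by
  simp only [Int.natCast_natAbs]
  rcases abs_choice x with hx | hx <;> rcases abs_choice y with hy | hy <;>
    simp [hx, hy, hf.neg_fst, hf.neg_snd]

theorem apply_max_min (hf : ReflectionMonotone f) (x y : ℤ) :
    f (((max x.natAbs y.natAbs : ℕ) : ℤ), ((min x.natAbs y.natAbs : ℕ) : ℤ)) = f (x, y) := by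
  rw [← hf.apply_natAbs x y]
  rcases le_total x.natAbs y.natAbs with h | h
  · rw [max_eq_right h, min_eq_left h, hf.swap]
  · rw [max_eq_left h, min_eq_right h]

theorem apply_le_of_add_le (hf : ReflectionMonotone f) {a b c d : ℕ} (h : c + d ≤ a) :
    f (a, b) ≤ f (c, d) := by
  have clear_snd : f (a, b) ≤ f (a, 0) := by
    rcases Nat.eq_zero_or_pos b with rfl | hb
    · exact le_rfl
    · rw [← hf.swap, ← hf.swap _ 0]
      simpa using hf.reflect_vertical b 0 a (by exact_mod_cast hb) (by omega)
  have move_in : f (a, 0) ≤ f ((c + d : ℕ), 0) := by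
    rcases Nat.eq_zero_or_pos a with rfl | ha
    · obtain ⟨rfl, rfl⟩ : c = 0 ∧ d = 0 := by omega
      exact le_rfl
    · simpa using hf.reflect_vertical (a + (c + d : ℕ)) (c + d : ℕ) 0 (by omega) (by omega)
  have rotate : f ((c + d : ℕ), 0) ≤ f (c, d) := by
    rcases Nat.eq_zero_or_pos c with rfl | hc
    · simp [hf.swap]
    · simpa [add_comm] using hf.reflect_diagonal c c d (by exact_mod_cast hc) (by omega)
  exact clear_snd.trans (move_in.trans rotate)

theorem apply_le_of_normL1_le_normLinf (hf : ReflectionMonotone f) {u v : ℤ × ℤ}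
    (huv : normL1 u ≤ normLinf v) : f v ≤ f u := by
  rw [← hf.apply_max_min v.1 v.2, ← hf.apply_natAbs u.1 u.2]
  exact hf.apply_le_of_add_le huv

end ReflectionMonotone

theorem reflectionMonotone_ite_zero {M : Type*} [Preorder M] [Zero M] {a : M} (ha : 0 ≤ a) :
    ReflectionMonotone (fun u : ℤ × ℤ => if u = (0, 0) then a else 0) where
  neg_fst x y := by simp
  neg_snd x y := by simp
  swap x y := by simp [and_comm]
  reflect_vertical k x y hk hx := by
    rw [if_neg (by simp only [Prod.mk.injEq]; omega)]
    split_ifs <;> simp [ha]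
  reflect_diagonal c x y hc hxy := by
    rw [if_neg (by simp only [Prod.mk.injEq]; omega)]
    split_ifs <;> simp [ha]

noncomputable def radialStep (g : ℤ × ℤ → ℝ≥0∞) (ρ : ℕ → ℝ≥0∞) (x : ℤ × ℤ) : ℝ≥0∞ :=
  ∑' w, g w * ρ (dist1 w x)

section radialStep

variable {g : ℤ × ℤ → ℝ≥0∞} {ρ : ℕ → ℝ≥0∞}

theorem radialStep_apply_of_isometry {σ : ℤ × ℤ → ℤ × ℤ} (hσ : Involutive σ)
    (hiso : ∀ a b, dist1 (σ a) (σ b) = dist1 a b) (hg : ∀ w, g (σ w) = g w) (x : ℤ × ℤ) :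
    radialStep g ρ (σ x) = radialStep g ρ x := by
  rw [radialStep, ← hσ.coe_toPerm, ← (hσ.toPerm σ).tsum_eq]
  simp only [hσ.coe_toPerm, hg, hiso, radialStep]

theorem radialStep_reflect_le (hρ : Antitone ρ) {σ : ℤ × ℤ → ℤ × ℤ} (hσ : Involutive σ)
    (hiso : ∀ a b, dist1 (σ a) (σ b) = dist1 a b) {P : ℤ × ℤ → Prop}
    (hP : ∀ w, ¬P w → P (σ w)) (hg : ∀ w, P w → g (σ w) ≤ g w) {u : ℤ × ℤ}
    (hu : ∀ w, P w → dist1 w u ≤ dist1 w (σ u)) :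
    radialStep g ρ (σ u) ≤ radialStep g ρ u := by
  set F := fun w => g w * ρ (dist1 w u)
  set G := fun w => g w * ρ (dist1 w (σ u))
  have pair_le : ∀ w, P w → G w + G (σ w) ≤ F w + F (σ w) := by
    intro w hw
    have h₁ : dist1 (σ w) (σ u) = dist1 w u := hiso w u
    have h₂ : dist1 (σ w) u = dist1 w (σ u) := by rw [← hiso w (σ u), hσ u]
    simp only [F, G, h₁, h₂]
    exact ENNReal.mul_add_mul_le_mul_add_mul (hg w hw) (hρ (hu w hw))
  refine ENNReal.tsum_le_tsum_of_involutive hσ fun w => ?_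
  by_cases hw : P w
  · exact pair_le w hw
  · simpa only [hσ w, add_comm] using pair_le (σ w) (hP w hw)

theorem reflectionMonotone_radialStep (hρ : Antitone ρ) (hg : ReflectionMonotone g) :
    ReflectionMonotone (radialStep g ρ) where
  neg_fst x y := radialStep_apply_of_isometry (σ := fun w => (-w.1, w.2)) (fun w => by simp)
    (fun a b => by simp only [dist1]; omega) (fun w => hg.neg_fst w.1 w.2) (x, y)
  neg_snd x y := radialStep_apply_of_isometry (σ := fun w => (w.1, -w.2)) (fun w => by simp)
    (fun a b => by simp only [dist1]; omega) (fun w => hg.neg_snd w.1 w.2) (x, y)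
  swap x y := radialStep_apply_of_isometry (σ := Prod.swap) Prod.swap_swap
    (fun a b => by simp only [dist1, Prod.fst_swap, Prod.snd_swap]; omega)
    (fun w => hg.swap w.1 w.2) (x, y)
  reflect_vertical k x y hk hx :=
    radialStep_reflect_le hρ (σ := fun w => (k - w.1, w.2)) (P := fun w => 2 * w.1 ≤ k)
      (fun w => by simp) (fun a b => by simp only [dist1]; omega) (fun w hw => by dsimp; omega)
      (fun w hw => hg.reflect_vertical k w.1 w.2 hk hw) (u := (x, y))
      (fun w hw => by simp only [dist1]; omega)
  reflect_diagonal c x y hc hxy :=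
    radialStep_reflect_le hρ (σ := fun w => (w.2 + c, w.1 - c)) (P := fun w => w.1 - w.2 ≤ c)
      (fun w => by simp) (fun a b => by simp only [dist1]; omega) (fun w hw => by dsimp; omega)
      (fun w hw => hg.reflect_diagonal c w.1 w.2 hc hw) (u := (x, y))
      (fun w hw => by simp only [dist1]; omega)

/-- Far from the origin, the term at `w` of the sum at `x` is dominated by the term at
`y + w / 4` of the sum at `y`, and `w ↦ w / 4` is `16`-to-one. -/
theorem radialStep_ne_top_of_ne_top (hg : ReflectionMonotone g) (hg_top : ∀ w, g w ≠ ⊤)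
    (hρ : Antitone ρ) (hρ_top : ∀ n, ρ n ≠ ⊤) (x : ℤ × ℤ) {y : ℤ × ℤ}
    (hy : radialStep g ρ y ≠ ⊤) : radialStep g ρ x ≠ ⊤ := by
  set N := 2 * (normL1 x + normL1 y) + 4
  set E := Finset.Icc (-(N : ℤ), -(N : ℤ)) (N, N)
  set F := fun w => g w * ρ (dist1 w y)
  have far_le (w : ℤ × ℤ) (hw : w ∉ E) :
      g w * ρ (dist1 w x) ≤ F (y + (w.1 / (4 : ℕ), w.2 / (4 : ℕ))) := by
    have hN := lt_normLinf_of_notMem_Icc hw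
    have hyb := normL1_add_le y (w.1 / 4, w.2 / 4)
    have hb := two_mul_normL1_ediv_four_le w
    have hx := normLinf_le_dist1_add w x
    refine mul_le_mul' (hg.apply_le_of_normL1_le_normLinf ?_) (hρ ?_)
    · simp only [Nat.cast_ofNat]; omega
    · simp only [Nat.cast_ofNat, dist1_add_left]; omega
  have le_split (w : ℤ × ℤ) : g w * ρ (dist1 w x) ≤
      F (y + (w.1 / (4 : ℕ), w.2 / (4 : ℕ))) + (E : Set (ℤ × ℤ)).indicator
        (fun w => g w * ρ (dist1 w x)) w := by
    by_cases hw : w ∈ E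
    · simp [Set.indicator_of_mem (Finset.mem_coe.2 hw)]
    · exact (far_le w hw).trans le_self_add
  have hF : ∑' w : ℤ × ℤ, F (y + (w.1 / (4 : ℕ), w.2 / (4 : ℕ))) =
      ((4 : ℕ) : ℝ≥0∞) ^ 2 * radialStep g ρ y := by
    rw [ENNReal.tsum_comp_ediv_prod 4 (fun q => F (y + q))]
    exact congrArg _ ((Equiv.addLeft y).tsum_eq F)
  refine ne_top_of_le_ne_top ?_ ((ENNReal.tsum_le_tsum le_split).trans_eq ENNReal.tsum_add)
  rw [hF, ← sum_eq_tsum_indicator]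
  exact ENNReal.add_ne_top.2 ⟨ENNReal.mul_ne_top (by simp) hy,
    ENNReal.sum_ne_top.2 fun w _ => ENNReal.mul_ne_top (hg_top w) (hρ_top _)⟩

end radialStep

theorem ReflectionMonotone.tsum_mul_dist1 {p : ℤ × ℤ → ℝ} {ρ : ℕ → ℝ}
    (hp : ReflectionMonotone p) (hp0 : ∀ w, 0 ≤ p w) (hρ : Antitone ρ) (hρ0 : ∀ n, 0 ≤ ρ n) :
    ReflectionMonotone (fun v => ∑' w, p w * ρ (dist1 w v)) ∧
      ∀ v, 0 ≤ ∑' w, p w * ρ (dist1 w v) := by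
  set g := ENNReal.ofReal ∘ p
  set ρ' := ENNReal.ofReal ∘ ρ
  have hρ' : Antitone ρ' := ENNReal.ofReal_mono.comp_antitone hρ
  have hg : ReflectionMonotone g := hp.comp (ENNReal.ofReal_mono.monotoneOn _)
  have eq_toReal : (fun v => ∑' w, p w * ρ (dist1 w v)) = ENNReal.toReal ∘ radialStep g ρ' := by
    ext v
    simp only [comp_apply, radialStep, g, ρ', ← ENNReal.ofReal_mul (hp0 _),
      ENNReal.tsum_toReal_eq fun _ => ENNReal.ofReal_ne_top,
      ENNReal.toReal_ofReal (mul_nonneg (hp0 _) (hρ0 _))]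
  refine ⟨?_, fun v => tsum_nonneg fun w => mul_nonneg (hp0 w) (hρ0 _)⟩
  rw [eq_toReal]
  refine (reflectionMonotone_radialStep hρ' hg).comp ?_
  rintro _ ⟨a, rfl⟩ _ ⟨b, rfl⟩ hab
  by_cases hb : radialStep g ρ' b = ⊤
  · have ha : radialStep g ρ' a = ⊤ := by
      by_contra ha
      exact radialStep_ne_top_of_ne_top hg (fun _ => ENNReal.ofReal_ne_top) hρ'
        (fun _ => ENNReal.ofReal_ne_top) b ha hb
    rw [ha, hb]
  · exact ENNReal.toReal_mono hb hab

end RadialJump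

open RadialJump in
theorem stmt_11_general (p : ℕ → ℤ × ℤ → ℝ) (ρ : ℕ → ℝ)
    (hρ0 : ∀ n, 0 ≤ ρ n) (hρmono : Antitone ρ)
    (h0 : p 0 = fun u => if u = (0, 0) then 1 else 0)
    (hstep : ∀ t v, p (t + 1) v = ∑' w : ℤ × ℤ, p t w * ρ (dist1 w v))
    (u v : ℤ × ℤ)
    (huv : u.1.natAbs + u.2.natAbs ≤ max v.1.natAbs v.2.natAbs)
    (t : ℕ) :
    p t v ≤ p t u := by
  have invariant : ∀ s, ReflectionMonotone (p s) ∧ ∀ w, 0 ≤ p s w := by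
    intro s
    induction s with
    | zero =>
      rw [h0]
      refine ⟨reflectionMonotone_ite_zero zero_le_one, fun w => ?_⟩
      dsimp only
      split_ifs <;> norm_num
    | succ s ih =>
      rw [show p (s + 1) = _ from funext (hstep s)]
      exact ih.1.tsum_mul_dist1 ih.2 hρmono hρ0
  exact (invariant t).1.apply_le_of_normL1_le_normLinf huv

/-- Monotonicity property of monotone radial jump processes on `ℤ²`.  A monotone
radial process started at the origin is described by its distributions
`p t : ℤ² → ℝ` (`p t u = P(J_t = u)`): `p 0` is the point mass at the origin and
`p (t+1) v = ∑_w p t w · ρ(‖w − v‖₁)` for a non-increasing function `ρ : ℕ → [0,1]`.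
Then for all `u v : ℤ²` with `‖u‖₁ ≤ ‖v‖_∞` and all `t`, `P(J_t = u) ≥ P(J_t = v)`. -/
theorem stmt_11 (p : ℕ → ℤ × ℤ → ℝ) (ρ : ℕ → ℝ)
    (hρ0 : ∀ n, 0 ≤ ρ n) (hρ1 : ∀ n, ρ n ≤ 1) (hρmono : Antitone ρ)
    (h0 : p 0 = fun u => if u = (0, 0) then 1 else 0)
    (hstep : ∀ t v, p (t + 1) v = ∑' w : ℤ × ℤ, p t w * ρ (dist1 w v))
    (u v : ℤ × ℤ)
    (huv : u.1.natAbs + u.2.natAbs ≤ max v.1.natAbs v.2.natAbs)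
    (t : ℕ) :
    p t v ≤ p t u :=
  stmt_11_general p ρ hρ0 hρmono h0 hstep u v huv t
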